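/- Let n ∈ ℕ and let p ∈ ℂ[x] be a polynomial with deg p ≤ n. Then p(x) = ∑_{k=0}^{n} C_k · H_{k,q}(x|λ), where C_k = (1/([k]_q! · (1 − λ))) · ( (D_q^k p)(1) − λ · (D_q^k p)(0) ) and D_q^k p denotes the k-fold q-derivative of p. -/

import Mathlib

open Finset Polynomial

/-- The `q`-integer `[n]_q = (1 - q^n)/(1 - q)` viewed in `ℂ`. -/
noncomputable def qInt (q : ℝ) (n : ℕ) : ℂ := (1 - (q : ℂ) ^ n) / (1 - (q : ℂ))

/-- The `q`-factorial `[n]_q! = ∏_{j=1}^n [j]_q`. -/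
noncomputable def qFact (q : ℝ) (n : ℕ) : ℂ := ∏ j ∈ Finset.range n, qInt q (j + 1)

/-- The `q`-binomial coefficient `[n]_q!/([k]_q! [n-k]_q!)`. -/
noncomputable def qBinom (q : ℝ) (n k : ℕ) : ℂ := qFact q n / (qFact q k * qFact q (n - k))

/-- The formal `q`-exponential `e_q(t) = ∑ t^n/[n]_q!` in `ℂ[x][[t]]`. -/
noncomputable def qExp (q : ℝ) : PowerSeries (Polynomial ℂ) :=
  PowerSeries.mk fun n => Polynomial.C (1 / qFact q n)

/-- The formal series `e_q(xt) = ∑ x^n t^n/[n]_q!` in `ℂ[x][[t]]`. -/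
noncomputable def qExpX (q : ℝ) : PowerSeries (Polynomial ℂ) :=
  PowerSeries.mk fun n => Polynomial.C (1 / qFact q n) * Polynomial.X ^ n

/-- `H : ℕ → ℂ[x]` is the family of `q`-Frobenius-Euler polynomials `H_{n,q}(x|λ)`:
`(∑ H_n t^n/[n]_q!) ⬝ (e_q(t) - λ) = (1 - λ) e_q(xt)` in `ℂ[x][[t]]`. -/
def IsqFrobeniusEuler (q : ℝ) (lam : ℂ) (H : ℕ → Polynomial ℂ) : Prop :=
  (PowerSeries.mk fun n => Polynomial.C (1 / qFact q n) * H n) *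
      (qExp q - PowerSeries.C (R := Polynomial ℂ) (Polynomial.C lam)) =
    PowerSeries.C (R := Polynomial ℂ) (Polynomial.C (1 - lam)) * qExpX q

/-- The `q`-derivative on `ℂ[x]`, determined by `D_q x^n = [n]_q x^(n-1)`. -/
noncomputable def qDeriv (q : ℝ) (p : Polynomial ℂ) : Polynomial ℂ :=
  p.sum fun n a => Polynomial.C (a * qInt q n) * Polynomial.X ^ (n - 1)


/-!
Let `G = ∑ Hₙ tⁿ/[n]_q!`, so that `G · (e_q(t) - λ) = (1 - λ) e_q(xt)`. Since `e_q(t) - λ` is a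
nonzero element of the domain `ℂ[x][[t]]`, it cancels from every identity obtained by applying a
`ℂ`-algebra endomorphism of `ℂ[x]` coefficientwise. The substitutions `x ↦ 1` and `x ↦ 0` give
`Hₙ(1) - λ Hₙ(0) = (1 - λ) δₙ₀`; the substitution `x ↦ qx`, together with
`p(x) - p(qx) = (1 - q) x (D_q p)(x)`, gives `D_q G = t G`, i.e. `D_q Hₙ = [n]_q Hₙ₋₁`.
Hence the functionals `Lₖ p = ((D_qᵏ p)(1) - λ (D_qᵏ p)(0)) / ([k]_q! (1 - λ))` satisfy
`Lₖ Hₘ = δₖₘ`. For `deg p ≤ n` every `Lₖ` kills `r = p - ∑_{k ≤ n} Lₖ(p) Hₖ`, while a nonzero `r`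
would have `L_{deg r}(r) = lead(r) ≠ 0`.
-/

lemma qInt_zero (q : ℝ) : qInt q 0 = 0 := by simp [qInt]

@[simp] lemma qFact_zero (q : ℝ) : qFact q 0 = 1 := by simp [qFact]

lemma qFact_succ (q : ℝ) (n : ℕ) : qFact q (n + 1) = qFact q n * qInt q (n + 1) :=
  prod_range_succ _ _

lemma one_sub_mul_qInt (q : ℝ) (n : ℕ) : (1 - (q : ℂ)) * qInt q n = 1 - (q : ℂ) ^ n := by
  by_cases hq : (q : ℂ) = 1
  · simp [hq]
  · exact mul_div_cancel₀ _ (sub_ne_zero.2 (Ne.symm hq))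

lemma prod_range_qInt_sub (q : ℝ) (n : ℕ) : ∏ i ∈ range n, qInt q (n - i) = qFact q n := by
  rw [qFact, ← prod_range_reflect]
  refine prod_congr rfl fun i hi => ?_
  rw [mem_range] at hi
  congr 1
  omega

lemma one_sub_ofReal_pow_succ_ne_zero {q : ℝ} (hq : |q| < 1) (n : ℕ) :
    1 - (q : ℂ) ^ (n + 1) ≠ 0 := by
  rw [sub_ne_zero, ne_comm, ← Complex.ofReal_pow, Ne, Complex.ofReal_eq_one]
  refine ne_of_lt (lt_of_abs_lt ?_)
  rw [abs_pow]
  exact pow_lt_one₀ (abs_nonneg q) hq n.succ_ne_zero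

lemma qInt_succ_ne_zero {q : ℝ} (hq : |q| < 1) (n : ℕ) : qInt q (n + 1) ≠ 0 := by
  simpa [qInt] using div_ne_zero (one_sub_ofReal_pow_succ_ne_zero hq n)
    (one_sub_ofReal_pow_succ_ne_zero hq 0)

lemma qFact_ne_zero {q : ℝ} (hq : |q| < 1) (n : ℕ) : qFact q n ≠ 0 :=
  prod_ne_zero_iff.2 fun j _ => qInt_succ_ne_zero hq j

lemma coeff_qDeriv (q : ℝ) (p : ℂ[X]) (j : ℕ) :
    (qDeriv q p).coeff j = qInt q (j + 1) * p.coeff (j + 1) := by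
  rw [qDeriv, Polynomial.sum, finsetSum_coeff]
  simp_rw [coeff_C_mul, coeff_X_pow]
  rw [sum_eq_single (j + 1)]
  · simp [mul_comm]
  · intro b _ hb
    rcases b with _ | b
    · simp [qInt_zero]
    · simp [show j ≠ b by omega]
  · intro h
    simp [notMem_support_iff.mp h]

lemma coeff_qDeriv_iterate (q : ℝ) (k : ℕ) (p : ℂ[X]) (j : ℕ) :
    ((qDeriv q)^[k] p).coeff j = (∏ i ∈ range k, qInt q (j + i + 1)) * p.coeff (j + k) := by
  induction k generalizing j with
  | zero => simp
  | succ k ih =>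
    have hshift : ∀ i, j + (i + 1) + 1 = j + 1 + i + 1 := fun i => by omega
    rw [Function.iterate_succ_apply', coeff_qDeriv, ih, prod_range_succ', add_zero,
      show j + (k + 1) = j + 1 + k by omega]
    simp_rw [hshift]
    ring

lemma qDeriv_iterate_eq_zero_of_natDegree_lt (q : ℝ) {k : ℕ} {p : ℂ[X]} (h : p.natDegree < k) :
    (qDeriv q)^[k] p = 0 := by
  ext j
  rw [coeff_qDeriv_iterate, coeff_eq_zero_of_natDegree_lt (by omega), mul_zero, coeff_zero]

lemma qDeriv_iterate_natDegree (q : ℝ) (p : ℂ[X]) :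
    (qDeriv q)^[p.natDegree] p = C (qFact q p.natDegree * p.leadingCoeff) := by
  ext j
  rw [coeff_qDeriv_iterate, coeff_C]
  rcases j with _ | j
  · simp only [zero_add, qFact, leadingCoeff, if_true]
  · rw [coeff_eq_zero_of_natDegree_lt (by omega)]
    simp

lemma qDeriv_X_pow (q : ℝ) (n : ℕ) : qDeriv q (X ^ n) = C (qInt q n) * X ^ (n - 1) := by
  ext j
  rw [coeff_qDeriv, coeff_X_pow, coeff_C_mul, coeff_X_pow]
  rcases n with _ | n
  · simp [qInt_zero]
  · by_cases h : j = n <;> simp [h]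

noncomputable def lqDeriv (q : ℝ) : Module.End ℂ ℂ[X] where
  toFun := qDeriv q
  map_add' p r := by ext j; simp [coeff_qDeriv, mul_add]
  map_smul' c p := by
    ext j
    simp only [coeff_qDeriv, coeff_smul, smul_eq_mul, RingHom.id_apply]
    ring

lemma lqDeriv_pow_apply (q : ℝ) (k : ℕ) (p : ℂ[X]) : (lqDeriv q ^ k) p = (qDeriv q)^[k] p :=
  Module.End.pow_apply _ _ _

lemma qDeriv_C_mul (q : ℝ) (c : ℂ) (p : ℂ[X]) : qDeriv q (C c * p) = C c * qDeriv q p := by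
  rw [C_mul', C_mul']
  exact (lqDeriv q).map_smul c p

lemma X_mul_qDeriv (q : ℝ) (p : ℂ[X]) :
    X * C (1 - (q : ℂ)) * qDeriv q p = p - p.comp (C (q : ℂ) * X) := by
  ext j
  rw [mul_assoc, coeff_sub, comp_C_mul_X_coeff]
  rcases j with _ | j
  · simp
  · rw [coeff_X_mul, coeff_C_mul, coeff_qDeriv, ← mul_assoc, one_sub_mul_qInt]
    ring

noncomputable def qFrobeniusEulerCoeff (q : ℝ) (lam : ℂ) (k : ℕ) : ℂ[X] →ₗ[ℂ] ℂ :=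
  (1 / (qFact q k * (1 - lam))) • ((leval 1 - lam • leval 0) ∘ₗ lqDeriv q ^ k)

lemma qFrobeniusEulerCoeff_apply (q : ℝ) (lam : ℂ) (k : ℕ) (p : ℂ[X]) :
    qFrobeniusEulerCoeff q lam k p = 1 / (qFact q k * (1 - lam)) *
      (((qDeriv q)^[k] p).eval 1 - lam * ((qDeriv q)^[k] p).eval 0) := by
  simp [qFrobeniusEulerCoeff, lqDeriv_pow_apply]

lemma qFrobeniusEulerCoeff_eq_zero_of_natDegree_lt (q : ℝ) (lam : ℂ) {k : ℕ} {p : ℂ[X]}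
    (h : p.natDegree < k) : qFrobeniusEulerCoeff q lam k p = 0 := by
  simp [qFrobeniusEulerCoeff_apply, qDeriv_iterate_eq_zero_of_natDegree_lt q h]

lemma qFrobeniusEulerCoeff_natDegree {q : ℝ} (hq : |q| < 1) {lam : ℂ} (hlam : lam ≠ 1)
    (p : ℂ[X]) : qFrobeniusEulerCoeff q lam p.natDegree p = p.leadingCoeff := by
  have hF := qFact_ne_zero hq p.natDegree
  have hl : 1 - lam ≠ 0 := sub_ne_zero.2 hlam.symm
  rw [qFrobeniusEulerCoeff_apply, qDeriv_iterate_natDegree, eval_C, eval_C]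
  field_simp

lemma eq_zero_of_forall_qFrobeniusEulerCoeff_eq_zero {q : ℝ} (hq : |q| < 1) {lam : ℂ}
    (hlam : lam ≠ 1) {p : ℂ[X]} (h : ∀ k, qFrobeniusEulerCoeff q lam k p = 0) : p = 0 :=
  leadingCoeff_eq_zero.1 (qFrobeniusEulerCoeff_natDegree hq hlam p ▸ h _)

noncomputable def qEGF (q : ℝ) (f : ℕ → ℂ[X]) : PowerSeries ℂ[X] :=
  PowerSeries.mk fun n => C (1 / qFact q n) * f n

lemma coeff_qEGF (q : ℝ) (f : ℕ → ℂ[X]) (n : ℕ) :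
    PowerSeries.coeff n (qEGF q f) = C (1 / qFact q n) * f n :=
  PowerSeries.coeff_mk _ _

lemma qEGF_injective {q : ℝ} (hq : |q| < 1) : Function.Injective (qEGF q) := by
  intro f g h
  funext n
  have hn := congrArg (PowerSeries.coeff n) h
  rw [coeff_qEGF, coeff_qEGF] at hn
  exact mul_left_cancel₀ (C_ne_zero.2 (one_div_ne_zero (qFact_ne_zero hq n))) hn

lemma qEGF_sub (q : ℝ) (f g : ℕ → ℂ[X]) :
    qEGF q f - qEGF q g = qEGF q fun n => f n - g n := by
  refine PowerSeries.ext fun n => ?_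
  simp [coeff_qEGF, mul_sub]

lemma C_mul_qEGF (q : ℝ) (a : ℂ[X]) (f : ℕ → ℂ[X]) :
    PowerSeries.C a * qEGF q f = qEGF q fun n => a * f n := by
  refine PowerSeries.ext fun n => ?_
  simp only [PowerSeries.coeff_C_mul, coeff_qEGF]
  ring

lemma C_eq_qEGF (q : ℝ) (a : ℂ[X]) :
    PowerSeries.C a = qEGF q fun n => if n = 0 then a else 0 := by
  refine PowerSeries.ext fun n => ?_
  rcases n with _ | n <;> simp [coeff_qEGF, PowerSeries.coeff_C]

lemma X_mul_qEGF {q : ℝ} (hq : |q| < 1) (f : ℕ → ℂ[X]) :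
    PowerSeries.X * qEGF q f = qEGF q fun n => C (qInt q n) * f (n - 1) := by
  refine PowerSeries.ext fun n => ?_
  rcases n with _ | n
  · simp [coeff_qEGF, qInt_zero]
  · rw [PowerSeries.coeff_succ_X_mul, coeff_qEGF, coeff_qEGF, qFact_succ, ← mul_assoc, ← C_mul,
      Nat.add_sub_cancel]
    have := qInt_succ_ne_zero hq n
    congr 2
    field_simp

lemma qEGF_sub_comp_C_mul_X (q : ℝ) (f : ℕ → ℂ[X]) :
    qEGF q f - qEGF q (fun n => (f n).comp (C (q : ℂ) * X)) =
      PowerSeries.C (X * C (1 - (q : ℂ))) * qEGF q (fun n => qDeriv q (f n)) := by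
  rw [qEGF_sub, C_mul_qEGF]
  simp_rw [X_mul_qDeriv]

lemma qExp_eq_qEGF_one (q : ℝ) : qExp q = qEGF q fun _ => 1 := by
  refine PowerSeries.ext fun n => ?_
  simp [qExp, coeff_qEGF]

lemma qExp_sub_C_ne_zero (q : ℝ) {lam : ℂ} (hlam : lam ≠ 1) :
    qExp q - PowerSeries.C (C lam) ≠ 0 := by
  intro h
  have h0 := congrArg (PowerSeries.coeff 0) h
  simp only [qExp, map_sub, PowerSeries.coeff_mk, PowerSeries.coeff_C, if_true, qFact_zero,
    div_one, map_zero, C_1, sub_eq_zero] at h0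
  exact hlam (C_injective h0).symm

lemma map_qEGF (q : ℝ) (φ : ℂ[X] →ₐ[ℂ] ℂ[X]) (f : ℕ → ℂ[X]) :
    PowerSeries.map (φ : ℂ[X] →+* ℂ[X]) (qEGF q f) = qEGF q fun n => φ (f n) := by
  refine PowerSeries.ext fun n => ?_
  rw [PowerSeries.coeff_map, coeff_qEGF, coeff_qEGF, RingHom.coe_coe, map_mul, ← algebraMap_eq,
    AlgHom.commutes]

namespace IsqFrobeniusEuler

variable {q : ℝ} {lam : ℂ} {H : ℕ → ℂ[X]}

lemma map_algHom (hH : IsqFrobeniusEuler q lam H) (φ : ℂ[X] →ₐ[ℂ] ℂ[X]) :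
    (qEGF q fun n => φ (H n)) * (qExp q - PowerSeries.C (C lam)) =
      PowerSeries.C (C (1 - lam)) * qEGF q fun n => φ X ^ n := by
  have hφC (c : ℂ) : φ (C c) = C c := φ.commutes c
  have h : qEGF q H * ((qEGF q fun _ => 1) - PowerSeries.C (C lam)) =
      PowerSeries.C (C (1 - lam)) * qEGF q (X ^ ·) := qExp_eq_qEGF_one q ▸ hH
  have hφ := congrArg (PowerSeries.map (φ : ℂ[X] →+* ℂ[X])) h
  rw [map_mul, map_mul, map_sub, PowerSeries.map_C, PowerSeries.map_C, map_qEGF, map_qEGF,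
    map_qEGF] at hφ
  simpa only [RingHom.coe_coe, hφC, map_one, map_pow, qExp_eq_qEGF_one] using hφ

lemma eval_one_sub_mul_eval_zero (hH : IsqFrobeniusEuler q lam H) (hq : |q| < 1) (hlam : lam ≠ 1)
    (n : ℕ) : (H n).eval 1 - lam * (H n).eval 0 = if n = 0 then 1 - lam else 0 := by
  have hevalC (a : ℂ) (p : ℂ[X]) : aeval (C a) p = C (p.eval a) :=
    aeval_algebraMap_apply ℂ[X] a p
  have h1 := hH.map_algHom (aeval (C 1))
  have h0 := hH.map_algHom (aeval (C 0))
  rw [aeval_X] at h1 h0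
  simp_rw [hevalC] at h1 h0
  simp only [← C_pow, one_pow, C_1, ← qExp_eq_qEGF_one] at h1 h0
  have hsplit : (qEGF q fun n => C ((H n).eval 1 - lam * (H n).eval 0)) =
      (qEGF q fun n => C ((H n).eval 1)) -
        PowerSeries.C (C lam) * qEGF q fun n => C ((H n).eval 0) := by
    rw [C_mul_qEGF, qEGF_sub]
    simp only [C_sub, C_mul]
  have hone : (qEGF q fun n => C ((0 : ℂ) ^ n)) = 1 := by
    rw [← map_one PowerSeries.C, C_eq_qEGF q]
    congr 1
    funext n
    rcases n with _ | n <;> simp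
  rw [hone] at h0
  have key : (qEGF q fun n => C ((H n).eval 1 - lam * (H n).eval 0)) *
      (qExp q - PowerSeries.C (C lam)) =
        PowerSeries.C (C (1 - lam)) * (qExp q - PowerSeries.C (C lam)) := by
    rw [hsplit]
    linear_combination h1 - PowerSeries.C (C lam) * h0
  have hn := congrFun (qEGF_injective hq ((mul_right_cancel₀ (qExp_sub_C_ne_zero q hlam) key).trans
    (C_eq_qEGF q _))) n
  split_ifs at hn ⊢
  · exact C_injective hn
  · exact C_eq_zero.1 hn

lemma qEGF_qDeriv (hH : IsqFrobeniusEuler q lam H) (hq : |q| < 1) (hlam : lam ≠ 1) :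
    (qEGF q fun n => qDeriv q (H n)) = PowerSeries.X * qEGF q H := by
  have hH' : qEGF q H * (qExp q - PowerSeries.C (C lam)) =
      PowerSeries.C (C (1 - lam)) * qEGF q (X ^ ·) := hH
  have hdil := hH.map_algHom (aeval (C (q : ℂ) * X))
  simp only [aeval_X, ← comp_eq_aeval] at hdil
  have hXpow := qEGF_sub_comp_C_mul_X q (X ^ ·)
  simp only [X_pow_comp, qDeriv_X_pow, ← X_mul_qEGF hq] at hXpow
  have hc : PowerSeries.C (X * C (1 - (q : ℂ))) ≠ 0 := by
    have hq1 : 1 - (q : ℂ) ≠ 0 := by simpa using one_sub_ofReal_pow_succ_ne_zero hq 0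
    exact (map_ne_zero_iff _ PowerSeries.C_injective).2 (mul_ne_zero X_ne_zero (C_ne_zero.2 hq1))
  apply mul_left_cancel₀ hc
  apply mul_right_cancel₀ (qExp_sub_C_ne_zero q hlam)
  rw [← qEGF_sub_comp_C_mul_X]
  calc _ = PowerSeries.C (C (1 - lam)) *
          ((qEGF q (X ^ ·)) - qEGF q fun n => (C (q : ℂ) * X) ^ n) := by
        linear_combination hH' - hdil
    _ = _ := by
        rw [hXpow]
        linear_combination -(PowerSeries.C (X * C (1 - (q : ℂ))) * PowerSeries.X) * hH'

lemma qDeriv_eq (hH : IsqFrobeniusEuler q lam H) (hq : |q| < 1) (hlam : lam ≠ 1) (n : ℕ) :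
    qDeriv q (H n) = C (qInt q n) * H (n - 1) :=
  congrFun (qEGF_injective hq ((hH.qEGF_qDeriv hq hlam).trans (X_mul_qEGF hq H))) n

lemma qDeriv_iterate (hH : IsqFrobeniusEuler q lam H) (hq : |q| < 1) (hlam : lam ≠ 1)
    (k n : ℕ) : (qDeriv q)^[k] (H n) = C (∏ i ∈ range k, qInt q (n - i)) * H (n - k) := by
  induction k with
  | zero => simp
  | succ k ih =>
    rw [Function.iterate_succ_apply', ih, qDeriv_C_mul, hH.qDeriv_eq hq hlam, prod_range_succ,
      C_mul, Nat.sub_sub, mul_assoc]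

lemma qFrobeniusEulerCoeff_apply_eq (hH : IsqFrobeniusEuler q lam H) (hq : |q| < 1)
    (hlam : lam ≠ 1) (k n : ℕ) : qFrobeniusEulerCoeff q lam k (H n) = if k = n then 1 else 0 := by
  simp only [qFrobeniusEulerCoeff_apply, hH.qDeriv_iterate hq hlam, eval_mul, eval_C]
  rw [mul_left_comm lam, ← mul_sub, hH.eval_one_sub_mul_eval_zero hq hlam]
  rcases lt_trichotomy k n with hkn | rfl | hkn
  · simp [hkn.ne, Nat.sub_ne_zero_of_lt hkn]
  · have hF := qFact_ne_zero hq k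
    have hl : 1 - lam ≠ 0 := sub_ne_zero.2 hlam.symm
    simp only [prod_range_qInt_sub, Nat.sub_self, if_true]
    field_simp
  · rw [prod_eq_zero (mem_range.2 hkn) (by rw [Nat.sub_self, qInt_zero])]
    simp [hkn.ne']

lemma eq_sum_qFrobeniusEulerCoeff_mul (hH : IsqFrobeniusEuler q lam H) (hq : |q| < 1)
    (hlam : lam ≠ 1) {n : ℕ} {p : ℂ[X]} (hp : p.natDegree ≤ n) :
    p = ∑ k ∈ range (n + 1), C (qFrobeniusEulerCoeff q lam k p) * H k := by
  rw [← sub_eq_zero]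
  refine eq_zero_of_forall_qFrobeniusEulerCoeff_eq_zero hq hlam fun j => ?_
  simp only [map_sub, map_sum, C_mul', map_smul, hH.qFrobeniusEulerCoeff_apply_eq hq hlam,
    smul_eq_mul, mul_ite, mul_one, mul_zero, sum_ite_eq, mem_range]
  split_ifs with hj
  · exact sub_self _
  · rw [qFrobeniusEulerCoeff_eq_zero_of_natDegree_lt q lam (by omega), sub_zero]

end IsqFrobeniusEuler

/-- Every `p ∈ ℂ[x]` with `deg p ≤ n` expands as
`p = ∑_{k=0}^n C_k H_{k,q}(x|λ)` with
`C_k = (((D_q)^k p)(1) - λ ((D_q)^k p)(0)) / ([k]_q! (1-λ))`. -/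
theorem expansion_in_qFrobeniusEuler_basis
    (q : ℝ) (hq0 : 0 < q) (hq1 : q < 1) (lam : ℂ) (hlam : lam ≠ 1)
    (H : ℕ → Polynomial ℂ) (hH : IsqFrobeniusEuler q lam H)
    (n : ℕ) (p : Polynomial ℂ) (hp : p.natDegree ≤ n) :
    p = ∑ k ∈ Finset.range (n + 1),
      Polynomial.C ((1 / (qFact q k * (1 - lam))) *
        (((qDeriv q)^[k] p).eval 1 - lam * ((qDeriv q)^[k] p).eval 0)) * H k := by
  have hq : |q| < 1 := abs_lt.2 ⟨by linarith, hq1⟩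
  simpa only [qFrobeniusEulerCoeff_apply] using hH.eq_sum_qFrobeniusEulerCoeff_mul hq hlam hp
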